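/- arXiv:2309.01253 — 4 statements merged into one kernel-verified Lean document; each statement's English description precedes it below -/
import Mathlib

section
/- Let N be a positive integer and let A be a symmetric N×N integer matrix with nonzero determinant, with inverse A⁻¹ taken over ℚ. Let k ∈ ℤ^N be characteristic for A. Then for every x ∈ ℤ^N the vector k + 2Ax is again characteristic for A, and, with w(k') := ((k')ᵀ A⁻¹ k' + N)/4 ∈ ℚ, one has w(k + 2Ax) − w(k) = k·x + xᵀAx, and this integer is even. Consequently the weights w(k') for all k' in the equivalence class k + 2Aℤ^N lie in a single coset of 2ℤ in ℚ. -/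
open Matrix

/-- The weight function `w(k) = (kᵀ A⁻¹ k + N)/4 ∈ ℚ`, where `A⁻¹` is the inverse of the
integral matrix `A` taken over `ℚ`. -/
noncomputable def charWeight (N : ℕ) (A : Matrix (Fin N) (Fin N) ℤ) (k : Fin N → ℤ) : ℚ :=
  ((fun i => (k i : ℚ)) ⬝ᵥ ((A.map (Int.cast : ℤ → ℚ))⁻¹ *ᵥ fun i => (k i : ℚ)) + N) / 4

theorem stmt0 (N : ℕ) (hN : 0 < N) (A : Matrix (Fin N) (Fin N) ℤ)
    (hA : A.IsSymm) (hdet : A.det ≠ 0)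
    (k : Fin N → ℤ)
    (hk : ∀ x : Fin N → ℤ, k ⬝ᵥ x ≡ x ⬝ᵥ A *ᵥ x [ZMOD 2]) :
    (∀ x y : Fin N → ℤ,
        (k + (2 : ℤ) • A *ᵥ x) ⬝ᵥ y ≡ y ⬝ᵥ A *ᵥ y [ZMOD 2]) ∧
    (∀ x : Fin N → ℤ,
        charWeight N A (k + (2 : ℤ) • A *ᵥ x) - charWeight N A k
          = ((k ⬝ᵥ x + x ⬝ᵥ A *ᵥ x : ℤ) : ℚ) ∧
        (2 : ℤ) ∣ (k ⬝ᵥ x + x ⬝ᵥ A *ᵥ x)) ∧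
    (∀ k' : Fin N → ℤ, (∃ x : Fin N → ℤ, k' = k + (2 : ℤ) • A *ᵥ x) →
        ∃ m : ℤ, charWeight N A k' - charWeight N A k = 2 * m) := by
  -- setup over ℚ
  set f := (Int.castRingHom ℚ) with hf
  set Aq := A.map (Int.cast : ℤ → ℚ) with hAq
  have hAqdet : IsUnit Aq.det := by
    have : Aq.det = ((A.det : ℤ) : ℚ) := by
      rw [hAq, show (A.map (Int.cast : ℤ → ℚ)) = (Int.castRingHom ℚ).mapMatrix A from rfl,
        ← RingHom.map_det]; rfl
    rw [this]
    simpa using hdet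
  have hinv1 : Aq⁻¹ * Aq = 1 := Matrix.nonsing_inv_mul Aq hAqdet
  have hinv2 : Aq * Aq⁻¹ = 1 := Matrix.mul_nonsing_inv Aq hAqdet
  have hAqsymm : Aqᵀ = Aq := by
    rw [hAq, ← Matrix.transpose_map, hA.eq]
  have hdvd : ∀ x : Fin N → ℤ, (2 : ℤ) ∣ (k ⬝ᵥ x + x ⬝ᵥ A *ᵥ x) := by
    intro x
    have h := (hk x).dvd
    omega
  have hcast : ∀ v : Fin N → ℤ, (fun i => ((k + (2:ℤ) • A *ᵥ v) i : ℚ))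
      = (fun i => (k i : ℚ)) + (2 : ℚ) • Aq *ᵥ (fun i => (v i : ℚ)) := by
    intro v
    funext i
    have := RingHom.map_mulVec f A v i
    simp only [Pi.add_apply, Pi.smul_apply, smul_eq_mul]
    push_cast
    rw [show ((A *ᵥ v) i : ℚ) = f ((A *ᵥ v) i) from rfl, this]
    rfl
  have hdiff : ∀ x : Fin N → ℤ,
      charWeight N A (k + (2 : ℤ) • A *ᵥ x) - charWeight N A k
        = ((k ⬝ᵥ x + x ⬝ᵥ A *ᵥ x : ℤ) : ℚ) := by
    intro x
    set kq : Fin N → ℚ := fun i => (k i : ℚ) with hkq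
    set xq : Fin N → ℚ := fun i => (x i : ℚ) with hxq
    have hBA : Aq⁻¹ *ᵥ (Aq *ᵥ xq) = xq := by
      rw [Matrix.mulVec_mulVec, hinv1, Matrix.one_mulVec]
    have h1 : (Aq *ᵥ xq) ⬝ᵥ (Aq⁻¹ *ᵥ kq) = xq ⬝ᵥ kq := by
      have : Aq *ᵥ xq = xq ᵥ* Aq := by
        conv_lhs => rw [← hAqsymm]
        rw [Matrix.mulVec_transpose]
      rw [this, ← Matrix.dotProduct_mulVec, Matrix.mulVec_mulVec, hinv2,
        Matrix.one_mulVec]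
    have hkx : ((k ⬝ᵥ x : ℤ) : ℚ) = kq ⬝ᵥ xq := by
      rw [show ((k ⬝ᵥ x : ℤ) : ℚ) = f (k ⬝ᵥ x) from rfl, RingHom.map_dotProduct]; rfl
    have hxAx : ((x ⬝ᵥ A *ᵥ x : ℤ) : ℚ) = xq ⬝ᵥ Aq *ᵥ xq := by
      rw [show ((x ⬝ᵥ A *ᵥ x : ℤ) : ℚ) = f (x ⬝ᵥ A *ᵥ x) from rfl,
        RingHom.map_dotProduct]
      congr 1
      funext i
      exact RingHom.map_mulVec f A x i
    unfold charWeight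
    rw [hcast x]
    rw [Matrix.mulVec_add, Matrix.mulVec_smul, hBA,
      add_dotProduct, dotProduct_add, dotProduct_add,
      smul_dotProduct, smul_dotProduct, dotProduct_smul,
      dotProduct_smul, h1, dotProduct_comm (Aq *ᵥ xq) xq]
    push_cast [hkx, hxAx]
    rw [dotProduct_comm kq xq]
    simp only [smul_eq_mul]
    ring
  refine ⟨?_, fun x => ⟨hdiff x, hdvd x⟩, ?_⟩
  · intro x y
    have h2 : (k + (2 : ℤ) • A *ᵥ x) ⬝ᵥ y ≡ k ⬝ᵥ y [ZMOD 2] := by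
      apply Int.modEq_iff_dvd.mpr
      rw [add_dotProduct, smul_dotProduct]
      refine ⟨-((A *ᵥ x) ⬝ᵥ y), ?_⟩
      simp only [smul_eq_mul]
      ring
    exact h2.trans (hk y)
  · rintro k' ⟨x, rfl⟩
    obtain ⟨m, hm⟩ := hdvd x
    exact ⟨m, by rw [hdiff x, hm]; push_cast; ring⟩
end

section
/- Fix n ∈ ℕ and natural numbers a_0,…,a_{n−1} and b_0,…,b_{n−1}. Let ℤ[U] denote the polynomial ring over ℤ in one variable U, let F be the free ℤ[U]-module on generators x_0,…,x_n, let K ⊆ F be the ℤ[U]-submodule generated by the elements U^{a_i}·x_i − U^{b_i}·x_{i+1} for 0 ≤ i ≤ n−1, and let M = F/K. Then M is torsion-free as a ℤ-module: if m ∈ M and c ∈ ℤ with c ≠ 0 satisfy c·m = 0, then m = 0. -/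
open Polynomial

private lemma aux_dvd_of_mul_X_pow {c : ℤ} {p : ℤ[X]} {k : ℕ}
    (h : (C c) ∣ p * X ^ k) : (C c) ∣ p := by
  rw [C_dvd_iff_dvd_coeff] at h ⊢
  intro m
  simpa [coeff_mul_X_pow] using h (m + k)

theorem stmt5 (n : ℕ) (a b : Fin n → ℕ)
    (K : Submodule (Polynomial ℤ) (Fin (n + 1) → Polynomial ℤ))
    (hK : K = Submodule.span (Polynomial ℤ)
        {v | ∃ i : Fin n,
          v = Pi.single i.castSucc ((X : Polynomial ℤ) ^ a i)
              - Pi.single i.succ ((X : Polynomial ℤ) ^ b i)})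
    (m : (Fin (n + 1) → Polynomial ℤ) ⧸ K) (c : ℤ) (hc : c ≠ 0) (hcm : c • m = 0) :
    m = 0 := by
  set r : Fin n → (Fin (n+1) → ℤ[X]) := fun i =>
    Pi.single i.castSucc ((X : ℤ[X]) ^ a i) - Pi.single i.succ ((X : ℤ[X]) ^ b i) with hr
  have hK' : K = Submodule.span (Polynomial ℤ) (Set.range r) := by
    rw [hK]; congr 1; ext v; simp [hr, eq_comm]
  have hCc : (C c : ℤ[X]) ≠ 0 := by simpa using hc
  obtain ⟨f, rfl⟩ := Submodule.Quotient.mk_surjective K m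
  have hmem : c • f ∈ K := by
    rw [← Submodule.Quotient.mk_eq_zero]
    rw [show (Submodule.Quotient.mk (c • f) : _ ⧸ K) = c • Submodule.Quotient.mk f from
      map_zsmul (K.mkQ) c f]
    exact hcm
  rw [hK'] at hmem
  obtain ⟨p, hp⟩ := (Submodule.mem_span_range_iff_exists_fun ℤ[X]).mp hmem
  have hcf : c • f = fun j => C c * f j := by
    funext j
    simp [Pi.smul_apply, zsmul_eq_mul]
  rw [hcf] at hp
  -- coordinate equations
  have hco : ∀ j : Fin (n+1),
      ∑ i' : Fin n, p i' * ((if j = i'.castSucc then (X:ℤ[X])^(a i') else 0)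
        - (if j = i'.succ then (X:ℤ[X])^(b i') else 0)) = C c * f j := by
    intro j
    have := congrFun hp j
    simpa [hr, Finset.sum_apply, Pi.single_apply, smul_eq_mul, mul_sub] using this
  have key : ∀ k, ∀ i : Fin n, (i : ℕ) = k → (C c) ∣ p i := by
    intro k
    induction k using Nat.strong_induction_on with
    | _ k ih =>
      intro i hik
      have h1 := hco i.castSucc
      simp only [mul_sub] at h1
      rw [Finset.sum_sub_distrib] at h1
      have hA : ∑ i' : Fin n, p i' * (if i.castSucc = i'.castSucc then (X:ℤ[X])^(a i') else 0)
          = p i * X ^ (a i) := by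
        rw [Finset.sum_eq_single i]
        · simp
        · intro i' _ hne
          rw [if_neg, mul_zero]
          intro h; exact hne (Fin.castSucc_inj.mp h.symm)
        · intro h; exact absurd (Finset.mem_univ i) h
      rw [hA] at h1
      have hB : (C c) ∣ ∑ i' : Fin n, p i' * (if i.castSucc = i'.succ then (X:ℤ[X])^(b i') else 0) := by
        apply Finset.dvd_sum
        intro i' _
        by_cases h : i.castSucc = i'.succ
        · rw [if_pos h]
          have hlt : (i' : ℕ) < k := by
            have : (i' : ℕ) + 1 = (i : ℕ) := by
              have := congrArg Fin.val h
              simpa using this.symm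
            omega
          exact Dvd.dvd.mul_right (ih _ hlt i' rfl) _
        · rw [if_neg h, mul_zero]; exact dvd_zero _
      have : (C c) ∣ p i * X ^ (a i) := by
        have : p i * X ^ (a i) = C c * f i.castSucc
            + ∑ i' : Fin n, p i' * (if i.castSucc = i'.succ then (X:ℤ[X])^(b i') else 0) := by
          linear_combination h1
        rw [this]
        exact dvd_add (Dvd.intro _ rfl) hB
      exact aux_dvd_of_mul_X_pow this
  have key' : ∀ i : Fin n, (C c) ∣ p i := fun i => key i i rfl
  choose q hq using key'
  have hfe : f = ∑ i, q i • r i := by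
    funext j
    have h1 := congrFun hp j
    rw [Finset.sum_apply] at h1
    apply mul_left_cancel₀ hCc
    rw [← h1, Finset.sum_apply, Finset.mul_sum]
    apply Finset.sum_congr rfl
    intro i _
    simp only [Pi.smul_apply, smul_eq_mul, hq i]
    ring
  have : f ∈ K := by
    rw [hK', hfe]
    exact Submodule.sum_smul_mem _ _ fun i _ => Submodule.subset_span ⟨i, rfl⟩
  rwa [Submodule.Quotient.mk_eq_zero]
end

section
/- Let R = ℤ[z,w]/I, where I is the ideal of ℤ[z,w] generated by 2w − zw and w² − 2w, and let ℤ[θ,θ⁻¹] be the ring of Laurent polynomials over ℤ. Let r : R → ℤ[θ,θ⁻¹] be the ring homomorphism determined by r(z) = 2 − θ − θ⁻¹ and r(w) = 0 (well defined since both 2w − zw and w² − 2w map to 0). Then the kernel of r is exactly the ideal of R generated by the image of w. -/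
/-!
Write an element of `ℤ[z, w]` as `f(z) + w g`. Since `r` kills `w`, it sends the class of this
element to `f(2 - θ - θ⁻¹)`, so everything comes down to `u = 2 - θ - θ⁻¹` being transcendental
over `ℤ`. This holds because `θ` is transcendental and is a root of the monic polynomial
`X² - (2 - u) X + 1` over `ℤ[u]`: were `u` algebraic, `θ` would be algebraic too.
-/

open MvPolynomial LaurentPolynomial

theorem Transcendental.of_isIntegral_adjoin_singleton {R A : Type*} [CommRing R]
    [NoZeroDivisors R] [CommRing A] [NoZeroDivisors A] [Algebra R A] {a b : A}
    (ha : Transcendental R a) (hab : IsIntegral (Algebra.adjoin R {b}) a) :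
    Transcendental R b := fun hb ↦ by
  have := (Subalgebra.isAlgebraic_iff _).mp (Algebra.isAlgebraic_adjoin_singleton_iff.mpr hb)
  exact ha (IsIntegral.trans_isAlgebraic R hab)

namespace LaurentPolynomial

theorem transcendental_T_one {R : Type*} [CommRing R] : Transcendental R (T 1 : R[T;T⁻¹]) := by
  have : Polynomial.aeval (T 1 : R[T;T⁻¹]) = Polynomial.toLaurentAlg :=
    Polynomial.algHom_ext (by simp)
  rw [transcendental_iff_injective, this, Polynomial.coe_toLaurentAlg]
  exact Polynomial.toLaurent_injective

theorem transcendental_two_sub_T_one_sub_T_neg_one {R : Type*} [CommRing R] [NoZeroDivisors R] :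
    Transcendental R (2 - T 1 - T (-1) : R[T;T⁻¹]) := by
  refine transcendental_T_one.of_isIntegral_adjoin_singleton ?_
  set u : Algebra.adjoin R {(2 - T 1 - T (-1) : R[T;T⁻¹])} :=
    ⟨_, Algebra.self_mem_adjoin_singleton R _⟩
  refine ⟨Polynomial.X ^ 2 + (Polynomial.C u - 2) * Polynomial.X + 1, by monicity!, ?_⟩
  have h : (T 1 * T (-1) : R[T;T⁻¹]) = 1 := by rw [← T_add]; rfl
  simp only [u, Polynomial.eval₂_add, Polynomial.eval₂_X_pow, Polynomial.eval₂_mul,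
    Polynomial.eval₂_sub, Polynomial.eval₂_C, Subalgebra.algebraMap_apply, Polynomial.eval₂_ofNat,
    Polynomial.eval₂_X, Polynomial.eval₂_one]
  linear_combination -h

end LaurentPolynomial

namespace MvPolynomial

theorem sub_aeval_X_zero_mem_span_X_one {R : Type*} [CommRing R] (P : MvPolynomial (Fin 2) R) :
    P - Polynomial.aeval (X 0) (aeval ![Polynomial.X, 0] P : Polynomial R) ∈ Ideal.span {X 1} := by
  set J : Ideal (MvPolynomial (Fin 2) R) := Ideal.span {X 1}
  have h : (Ideal.Quotient.mkₐ R J).comp ((Polynomial.aeval (X 0)).comp (aeval ![Polynomial.X, 0]))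
      = Ideal.Quotient.mkₐ R J := by
    refine algHom_ext fun i ↦ ?_
    fin_cases i
    · simp
    · simp [J]
  rw [← Ideal.Quotient.eq, eq_comm, ← Ideal.Quotient.mkₐ_eq_mk R]
  exact DFunLike.congr_fun h P

theorem ker_aeval_vecCons_zero {R A : Type*} [CommRing R] [CommRing A] [Algebra R A]
    {u : A} (hu : Transcendental R u) :
    RingHom.ker (aeval ![u, 0] : MvPolynomial (Fin 2) R →ₐ[R] A) = Ideal.span {X 1} := by
  refine le_antisymm (fun P hP ↦ ?_) (Ideal.span_le.mpr <| by simp)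
  set p : Polynomial R := aeval ![Polynomial.X, 0] P
  have hp : Polynomial.aeval u p = 0 := by
    rw [← hP, ← AlgHom.comp_apply, comp_aeval]
    congr 2
    ext i
    fin_cases i <;> simp
  have hP' : P - Polynomial.aeval (X 0) p ∈ Ideal.span {X 1} := sub_aeval_X_zero_mem_span_X_one P
  rwa [transcendental_iff.mp hu p hp, map_zero, sub_zero] at hP'

end MvPolynomial

theorem stmt9_general
    (I : Ideal (MvPolynomial (Fin 2) ℤ))
    (r : (MvPolynomial (Fin 2) ℤ ⧸ I) →+* LaurentPolynomial ℤ)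
    (hz : r (Ideal.Quotient.mk I (X 0)) = 2 - T 1 - T (-1))
    (hw : r (Ideal.Quotient.mk I (X 1)) = 0) :
    RingHom.ker r = Ideal.span {Ideal.Quotient.mk I (X 1)} := by
  have hr : r.comp (Ideal.Quotient.mk I) =
      (aeval ![(2 - T 1 - T (-1) : ℤ[T;T⁻¹]), 0] : MvPolynomial (Fin 2) ℤ →ₐ[ℤ] _) :=
    ringHom_ext' (RingHom.ext_int _ _) fun i ↦ by fin_cases i <;> simp [hz, hw]
  rw [← Ideal.map_comap_of_surjective _ Ideal.Quotient.mk_surjective (RingHom.ker r),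
    RingHom.comap_ker, hr, RingHom.ker_coe_toRingHom,
    ker_aeval_vecCons_zero transcendental_two_sub_T_one_sub_T_neg_one,
    Ideal.map_span, Set.image_singleton]

theorem stmt9
    (I : Ideal (MvPolynomial (Fin 2) ℤ))
    (hI : I = Ideal.span
        {2 * X 1 - X 0 * X 1, (X 1) ^ 2 - 2 * X 1})
    (r : (MvPolynomial (Fin 2) ℤ ⧸ I) →+* LaurentPolynomial ℤ)
    (hz : r (Ideal.Quotient.mk I (X 0)) = 2 - T 1 - T (-1))
    (hw : r (Ideal.Quotient.mk I (X 1)) = 0) :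
    RingHom.ker r = Ideal.span {Ideal.Quotient.mk I (X 1)} :=
  stmt9_general I r hz hw
end

section
/- Let R = ℤ[z,w]/I, where I is the ideal of ℤ[z,w] generated by 2w − zw and w² − 2w, let ℤ[θ,θ⁻¹] be the ring of Laurent polynomials over ℤ, and let r : R → ℤ[θ,θ⁻¹] be the ring homomorphism determined by r(z) = 2 − θ − θ⁻¹ and r(w) = 0. Then for every n ∈ ℕ, the preimage under r of the ideal of ℤ[θ,θ⁻¹] generated by (1 − θ)^n is exactly the ideal of R generated by z^⌈n/2⌉ and w, where ⌈n/2⌉ denotes the ceiling of n/2. -/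
/-! Since `2 - θ - θ⁻¹ = -θ⁻¹ (1 - θ)²`, the element `r(z)` is a unit times `c²`, where
`c = 1 - θ`. Modulo `w`, every class of `R` is a polynomial `P(z)`, and `r(P(z)) = P(r(z))`.
If `c ^ n` divides `P(-θ⁻¹ c²)`, then the constant term of `P` is divisible by `c`, hence
vanishes (evaluate at `θ = 1`); dividing by `z` and by `c²` lowers `n` by two, so that
`z ^ ⌈n/2⌉` divides `P`. -/

namespace Polynomial

variable {R A : Type*} [CommRing R] [CommRing A] [Algebra R A] {c : A}

theorem X_dvd_of_dvd_aeval {x : A} (hc : ∀ a : R, c ∣ algebraMap R A a → a = 0)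
    (hx : c ∣ x) {P : R[X]} (h : c ∣ aeval x P) : X ∣ P := by
  rw [X_dvd_iff]
  have hP : aeval x P = aeval x P.divX * x + algebraMap R A (P.coeff 0) := by
    conv_lhs => rw [← divX_mul_X_add P]
    rw [map_add, map_mul, aeval_X, aeval_C]
  rw [hP] at h
  exact hc _ ((dvd_add_right (dvd_mul_of_dvd_right hx _)).mp h)

theorem X_pow_dvd_of_pow_dvd_aeval_mul_sq [IsDomain A] {u : A} (hc₀ : c ≠ 0)
    (hc : ∀ a : R, c ∣ algebraMap R A a → a = 0) (hu : IsUnit u) (n : ℕ) {P : R[X]}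
    (h : c ^ n ∣ aeval (u * c ^ 2) P) : X ^ ((n + 1) / 2) ∣ P := by
  have hcx : c ∣ u * c ^ 2 := ⟨u * c, by ring⟩
  induction n using Nat.twoStepInduction generalizing P with
  | zero => simp
  | one => simpa using X_dvd_of_dvd_aeval hc hcx (by simpa using h)
  | more n ih _ =>
    obtain ⟨Q, rfl⟩ := X_dvd_of_dvd_aeval hc hcx ((dvd_pow_self c (by omega)).trans h)
    have hQ : c ^ n ∣ aeval (u * c ^ 2) Q := by
      rw [map_mul, aeval_X, pow_add] at h
      rw [← hu.dvd_mul_left, ← mul_dvd_mul_iff_right (pow_ne_zero 2 hc₀)]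
      convert h using 1
      ring
    rw [show (n + 2 + 1) / 2 = (n + 1) / 2 + 1 by omega, pow_succ']
    exact mul_dvd_mul_left X (ih hQ)

end Polynomial

namespace LaurentPolynomial

variable {R : Type*} [CommRing R]

theorem two_sub_T_one_sub_T_neg_one :
    (2 - T 1 - T (-1) : R[T;T⁻¹]) = -T (-1) * (1 - T 1) ^ 2 := by
  have h : (T (-1) * T 1 : R[T;T⁻¹]) = 1 := by rw [← T_add]; simp
  linear_combination (T 1 - 2 : R[T;T⁻¹]) * h

theorem one_sub_T_one_ne_zero [Nontrivial R] : (1 - T 1 : R[T;T⁻¹]) ≠ 0 := by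
  have h : (1 - T 1 : R[T;T⁻¹]) = Polynomial.toLaurent (1 - Polynomial.X) := by simp
  rw [h, Polynomial.toLaurent_ne_zero, ← neg_sub, neg_ne_zero, ← Polynomial.C_1]
  exact Polynomial.X_sub_C_ne_zero 1

theorem eq_zero_of_one_sub_T_one_dvd_algebraMap (a : R)
    (h : (1 - T 1 : R[T;T⁻¹]) ∣ algebraMap R R[T;T⁻¹] a) : a = 0 := by
  simpa [← C_eq_algebraMap] using map_dvd (eval₂ (RingHom.id R) 1) h

end LaurentPolynomial

theorem MvPolynomial.exists_eq_aeval_X_zero_add_X_one_mul {R : Type*} [CommRing R]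
    (f : MvPolynomial (Fin 2) R) :
    ∃ (P : Polynomial R) (g : MvPolynomial (Fin 2) R),
      f = Polynomial.aeval (X 0) P + X 1 * g := by
  let J : Ideal (MvPolynomial (Fin 2) R) := Ideal.span {X 1}
  have hJ : (Ideal.Quotient.mkₐ R J).comp
      ((Polynomial.aeval (X 0)).comp (aeval ![Polynomial.X, 0])) = Ideal.Quotient.mkₐ R J := by
    ext i
    fin_cases i
    · simp
    · simpa using (Ideal.Quotient.eq_zero_iff_mem.mpr (Ideal.mem_span_singleton_self _)).symm
  obtain ⟨g, hg⟩ :=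
    Ideal.mem_span_singleton'.mp (Ideal.Quotient.eq.mp (AlgHom.congr_fun hJ f).symm)
  refine ⟨aeval ![Polynomial.X, 0] f, g, ?_⟩
  rw [mul_comm, hg]
  simp

open MvPolynomial LaurentPolynomial

theorem stmt10_general
    (I : Ideal (MvPolynomial (Fin 2) ℤ))
    (r : (MvPolynomial (Fin 2) ℤ ⧸ I) →+* LaurentPolynomial ℤ)
    (hz : r (Ideal.Quotient.mk I (X 0)) = 2 - T 1 - T (-1))
    (hw : r (Ideal.Quotient.mk I (X 1)) = 0) :
    ∀ n : ℕ,
      Ideal.comap r (Ideal.span {((1 - T 1) ^ n : LaurentPolynomial ℤ)})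
        = Ideal.span {(Ideal.Quotient.mk I (X 0)) ^ ((n + 1) / 2),
                      Ideal.Quotient.mk I (X 1)} := by
  intro n
  set z := Ideal.Quotient.mk I (X 0)
  set w := Ideal.Quotient.mk I (X 1)
  have hrz : r z = -T (-1) * (1 - T 1) ^ 2 := hz.trans two_sub_T_one_sub_T_neg_one
  apply le_antisymm
  · intro y hy
    obtain ⟨f, rfl⟩ := Ideal.Quotient.mk_surjective y
    obtain ⟨P, g, rfl⟩ := exists_eq_aeval_X_zero_add_X_one_mul f
    have hmk : Ideal.Quotient.mk I (Polynomial.aeval (X 0) P + X 1 * g)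
        = Polynomial.aeval z P + w * Ideal.Quotient.mk I g := by
      rw [map_add, map_mul]
      congr 1
      exact (Polynomial.aeval_algHom_apply (Ideal.Quotient.mkₐ ℤ I) (X 0) P).symm
    have hrP : r (Polynomial.aeval z P) = Polynomial.aeval (r z) P :=
      (Polynomial.aeval_algHom_apply r.toIntAlgHom z P).symm
    rw [Ideal.mem_comap, hmk, map_add, map_mul, hw, zero_mul, add_zero, hrP, hrz,
      Ideal.mem_span_singleton] at hy
    obtain ⟨Q, rfl⟩ := Polynomial.X_pow_dvd_of_pow_dvd_aeval_mul_sq one_sub_T_one_ne_zero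
      eq_zero_of_one_sub_T_one_dvd_algebraMap (isUnit_T (-1)).neg n hy
    refine Ideal.mem_span_pair.mpr ⟨Polynomial.aeval z Q, Ideal.Quotient.mk I g, ?_⟩
    rw [hmk, map_mul, map_pow, Polynomial.aeval_X]
    ring
  · rw [Ideal.span_le, Set.insert_subset_iff, Set.singleton_subset_iff]
    refine ⟨?_, by simp [hw]⟩
    rw [SetLike.mem_coe, Ideal.mem_comap, map_pow, hrz, mul_pow, ← pow_mul]
    exact Ideal.mul_mem_left _ _
      (Ideal.mem_span_singleton.mpr (pow_dvd_pow _ (by omega)))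

theorem stmt10
    (I : Ideal (MvPolynomial (Fin 2) ℤ))
    (hI : I = Ideal.span
        {2 * X 1 - X 0 * X 1, (X 1) ^ 2 - 2 * X 1})
    (r : (MvPolynomial (Fin 2) ℤ ⧸ I) →+* LaurentPolynomial ℤ)
    (hz : r (Ideal.Quotient.mk I (X 0)) = 2 - T 1 - T (-1))
    (hw : r (Ideal.Quotient.mk I (X 1)) = 0) :
    ∀ n : ℕ,
      Ideal.comap r (Ideal.span {((1 - T 1) ^ n : LaurentPolynomial ℤ)})
        = Ideal.span {(Ideal.Quotient.mk I (X 0)) ^ ((n + 1) / 2),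
                      Ideal.Quotient.mk I (X 1)} :=
  stmt10_general I r hz hw
end
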